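/- Conversely, if ρ ∈ A(μ) and λ ∈ ℝ satisfy the Thomas–Fermi equation (5/3) c_TF ρ(x)^{2/3} = max(0, λ − Φ_{ρ−μ}(x)) for almost every x ∈ ℝ, then ρ is a minimizer of E^TF over A(μ), i.e. E^TF(ρ) ≤ E^TF(σ) for all σ ∈ A(μ). -/

import Mathlib

/-!
With `f = ρ - μ` and `d = σ - ρ`, convexity of `t ↦ t^{5/3}` and of the square give
`E(σ) - E(ρ) ≥ ∫ (5/3) c_TF ρ^{2/3} d + 4π ∫ W_f W_d`, and by the Thomas–Fermi equation the first
integral is `∫ (λ - Φ_f)₊ d`. Since `Φ_f' = -4π W_f` and `∫ d = 0`, integrating by parts turns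
`4π ∫ W_f W_d` into `∫ (Φ_f - λ) d`, so the lower bound is `∫ (Φ_f - λ)₊ d = ∫ (Φ_f - λ)₊ σ ≥ 0`:
`ρ` vanishes where `Φ_f > λ`. As `Φ_f` may be unbounded, the integration by parts is done against
the bounded truncations `truncNeg ψₙ (Φ_f - λ)` of `λ - Φ_f`, which stay below `(λ - Φ_f)₊`, and
`n → ∞` is taken by dominated convergence.
-/

open MeasureTheory Real

/-- The primitive `W_f(x) = ∫_{-∞}^x f(y) dy`. -/
noncomputable def W (f : ℝ → ℝ) (x : ℝ) : ℝ := ∫ y in Set.Iic x, f y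

/-- The mean-field potential `Φ_f(x) = -4π ∫_0^x W_f(y) dy`. -/
noncomputable def Phi (f : ℝ → ℝ) (x : ℝ) : ℝ := -4 * π * ∫ y in (0:ℝ)..x, W f y

/-- The three-dimensional Thomas–Fermi constant. -/
noncomputable def cTF : ℝ := (3 / 10) * (3 * π ^ 2) ^ ((2 : ℝ) / 3)

/-- The admissible set `A(μ)` of the reduced Thomas–Fermi problem. -/
def Adm (μ ρ : ℝ → ℝ) : Prop :=
  Integrable ρ ∧ MemLp ρ (5/3) volume ∧ (∀ᵐ x, 0 ≤ ρ x) ∧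
    MemLp (W (fun y => ρ y - μ y)) 2 volume ∧ (∫ x, ρ x) = ∫ x, μ x

/-- The reduced one-dimensional Thomas–Fermi energy. -/
noncomputable def Etf (μ ρ : ℝ → ℝ) : ℝ :=
  cTF * (∫ x, ρ x ^ ((5 : ℝ) / 3)) + 2 * π * ∫ x, (W (fun y => ρ y - μ y) x) ^ 2

open Filter Topology Set
open scoped ENNReal

section Primitive

variable {f g : ℝ → ℝ}

lemma W_eq_add_intervalIntegral (hf : Integrable f) (a x : ℝ) :
    W f x = W f a + ∫ t in a..x, f t := by
  rw [← intervalIntegral.integral_Iic_sub_Iic hf.integrableOn hf.integrableOn, W, W]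
  ring

lemma continuous_W (hf : Integrable f) : Continuous (W f) := by
  rw [funext (W_eq_add_intervalIntegral hf 0)]
  exact continuous_const.add (hf.continuous_primitive 0)

lemma W_sub (hf : Integrable f) (hg : Integrable g) (x : ℝ) :
    W (fun y => f y - g y) x = W f x - W g x :=
  integral_sub hf.integrableOn hg.integrableOn

lemma tendsto_W_atTop (hf : Integrable f) : Tendsto (W f) atTop (𝓝 (∫ x, f x)) := by
  have := tendsto_setIntegral_of_monotone (μ := volume) (fun x : ℝ => measurableSet_Iic)
    (fun _ _ h => Iic_subset_Iic.2 h) (by rw [iUnion_Iic]; exact hf.integrableOn)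
  rwa [iUnion_Iic, Measure.restrict_univ] at this

lemma tendsto_W_atBot (hf : Integrable f) : Tendsto (W f) atBot (𝓝 0) := by
  have := tendsto_setIntegral_of_antitone (μ := volume) (fun x : ℝ => measurableSet_Iic (a := -x))
    (fun _ _ h => Iic_subset_Iic.2 (neg_le_neg h)) ⟨0, hf.integrableOn⟩
  rw [iInter_Iic_eq_empty_iff.2 (fun ⟨b, hb⟩ => by
    have := hb ⟨-(b - 1), rfl⟩; simp at this; linarith), Measure.restrict_empty,
    integral_zero_measure] at this
  exact this.comp tendsto_neg_atBot_atTop |>.congr fun x => by simp [W]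

lemma ae_hasDerivAt_W (hf : Integrable f) : ∀ᵐ x, HasDerivAt (W f) (f x) x := by
  filter_upwards [LocallyIntegrable.ae_hasDerivAt_integral hf.locallyIntegrable] with x hx
  rw [funext (W_eq_add_intervalIntegral hf 0)]
  exact (hx 0).const_add _

lemma absolutelyContinuousOnInterval_W (hf : Integrable f) (a b : ℝ) :
    AbsolutelyContinuousOnInterval (W f) a b := by
  rw [funext (W_eq_add_intervalIntegral hf a)]
  exact (LipschitzWith.const (W f a)).lipschitzOnWith.absolutelyContinuousOnInterval.add
    (hf.intervalIntegrable.absolutelyContinuousOnInterval_intervalIntegral left_mem_uIcc)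

end Primitive

lemma integral_mul_eq_neg_integral_deriv_mul_W {u u' d : ℝ → ℝ}
    (hu : ∀ x, HasDerivAt u (u' x) x) (hu' : Continuous u') {C : ℝ} (hC : ∀ x, ‖u x‖ ≤ C)
    (hd : Integrable d) (hd0 : ∫ x, d x = 0) (huW : Integrable fun x => u' x * W d x) :
    ∫ x, u x * d x = -∫ x, u' x * W d x := by
  have hderiv : deriv u = u' := funext fun x => (hu x).deriv
  have hAC (a b : ℝ) : AbsolutelyContinuousOnInterval u a b :=
    (contDiff_one_iff_deriv.2 ⟨fun x => (hu x).differentiableAt, hderiv ▸ hu'⟩).contDiffOn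
      |>.absolutelyContinuousOnInterval
  have hfinite (k : ℝ) : ∫ x in -k..k, u x * d x
      = u k * W d k - u (-k) * W d (-k) - ∫ x in -k..k, u' x * W d x := by
    rw [← hderiv, ← (hAC (-k) k).integral_mul_deriv_eq_deriv_mul
      (absolutelyContinuousOnInterval_W hd _ _)]
    exact intervalIntegral.integral_congr_ae
      ((ae_hasDerivAt_W hd).mono fun x hx _ => by rw [hx.deriv])
  have hu_bdd {l : Filter ℝ} : l.IsBoundedUnder (· ≤ ·) (norm ∘ u) := isBoundedUnder_of ⟨C, hC⟩
  have hud : Integrable fun x => u x * d x :=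
    hd.bdd_mul (continuous_iff_continuousAt.2 fun x => (hu x).continuousAt).aestronglyMeasurable
      (.of_forall hC)
  have hlim := ((isBoundedUnder_le_mul_tendsto_zero hu_bdd (hd0 ▸ tendsto_W_atTop hd)).sub
    ((isBoundedUnder_le_mul_tendsto_zero hu_bdd (tendsto_W_atBot hd)).comp
      tendsto_neg_atTop_atBot)).sub
    (intervalIntegral_tendsto_integral huW tendsto_neg_atTop_atBot tendsto_id)
  rw [sub_self, zero_sub] at hlim
  exact tendsto_nhds_unique
    (intervalIntegral_tendsto_integral hud tendsto_neg_atTop_atBot tendsto_id)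
    (hlim.congr fun k => (hfinite k).symm)

noncomputable def truncNeg (ψ : ℝ → ℝ) (t : ℝ) : ℝ := -∫ s in (0 : ℝ)..t, ψ s

section TruncNeg

variable {ψ : ℝ → ℝ}

lemma hasDerivAt_truncNeg (hψ : Continuous ψ) (t : ℝ) : HasDerivAt (truncNeg ψ) (-ψ t) t :=
  (hψ.integral_hasStrictDerivAt 0 t).hasDerivAt.neg

lemma continuous_truncNeg (hψ : Continuous ψ) : Continuous (truncNeg ψ) :=
  continuous_iff_continuousAt.2 fun t => (hasDerivAt_truncNeg hψ t).continuousAt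

lemma truncNeg_nonneg (hψ0 : ∀ s, 0 ≤ ψ s) {t : ℝ} (ht : t ≤ 0) : 0 ≤ truncNeg ψ t := by
  rw [truncNeg, intervalIntegral.integral_symm, neg_neg]
  exact intervalIntegral.integral_nonneg ht fun s _ => hψ0 s

lemma truncNeg_le (hψ : Continuous ψ) (hψ0 : ∀ s, 0 ≤ ψ s) (hψ1 : ∀ s, ψ s ≤ 1) (t : ℝ) :
    truncNeg ψ t ≤ max 0 (-t) := by
  rcases le_total 0 t with ht | ht
  · exact (neg_nonpos.2 (intervalIntegral.integral_nonneg ht fun s _ => hψ0 s)).trans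
      (le_max_left _ _)
  · rw [truncNeg, intervalIntegral.integral_symm, neg_neg]
    refine le_trans ?_ (le_max_right _ _)
    simpa using intervalIntegral.integral_mono_on ht (hψ.intervalIntegrable (μ := volume) _ _)
      intervalIntegrable_const fun s _ => hψ1 s

lemma norm_truncNeg_le (hψ : Integrable ψ) (t : ℝ) : ‖truncNeg ψ t‖ ≤ ∫ s, ‖ψ s‖ := by
  rw [truncNeg, norm_neg]
  exact (intervalIntegral.norm_integral_le_integral_norm_uIoc).trans
    (setIntegral_le_integral hψ.norm (.of_forall fun _ => norm_nonneg _))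

lemma truncNeg_eq_neg {t : ℝ} (h : ∀ s ∈ uIcc 0 t, ψ s = 1) : truncNeg ψ t = -t := by
  simp [truncNeg, intervalIntegral.integral_congr h]

end TruncNeg

def bumpSeq (n : ℕ) : ContDiffBump (0 : ℝ) := ⟨n + 1, n + 2, by positivity, by linarith⟩

lemma eventually_bumpSeq_eq_one (r : ℝ) : ∀ᶠ n in atTop, ∀ s, |s| ≤ r → bumpSeq n s = 1 := by
  filter_upwards [eventually_ge_atTop ⌈r⌉₊] with n hn s hs
  refine (bumpSeq n).one_of_mem_closedBall ?_
  rw [Metric.mem_closedBall, dist_zero_right, Real.norm_eq_abs]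
  exact hs.trans ((Nat.le_ceil r).trans (by
    show (⌈r⌉₊ : ℝ) ≤ n + 1
    exact_mod_cast hn.trans n.le_succ))

lemma norm_bumpSeq_le_one (n : ℕ) (s : ℝ) : ‖bumpSeq n s‖ ≤ 1 := by
  rw [Real.norm_of_nonneg (bumpSeq n).nonneg]
  exact (bumpSeq n).le_one

lemma tendsto_bumpSeq (s : ℝ) : Tendsto (fun n => bumpSeq n s) atTop (𝓝 1) :=
  tendsto_const_nhds.congr' <| (eventually_bumpSeq_eq_one |s|).mono fun _ h => (h s le_rfl).symm

lemma eventually_truncNeg_bumpSeq (t : ℝ) : ∀ᶠ n in atTop, truncNeg (bumpSeq n) t = -t :=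
  (eventually_bumpSeq_eq_one |t|).mono fun _ h => truncNeg_eq_neg fun s hs =>
    h s (by simpa using abs_sub_left_of_mem_uIcc hs)

section FirstVariation

variable {Φ Φ' σ ρ d : ℝ → ℝ} {lam : ℝ}

lemma integral_truncNeg_comp_mul_eq {ψ : ℝ → ℝ} (hψ : Continuous ψ) (hψi : Integrable ψ)
    (hψ1 : ∀ s, ‖ψ s‖ ≤ 1) (hΦ : ∀ x, HasDerivAt Φ (Φ' x) x) (hΦ' : Continuous Φ')
    (hd : Integrable d) (hd0 : ∫ x, d x = 0) (hW : Integrable fun x => Φ' x * W d x) :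
    ∫ x, truncNeg ψ (Φ x - lam) * d x = ∫ x, ψ (Φ x - lam) * (Φ' x * W d x) := by
  have hψΦ : Continuous fun x => ψ (Φ x - lam) :=
    hψ.comp ((continuous_iff_continuousAt.2 fun x => (hΦ x).continuousAt).sub continuous_const)
  rw [integral_mul_eq_neg_integral_deriv_mul_W (u := fun x => truncNeg ψ (Φ x - lam))
      (fun x => (hasDerivAt_truncNeg hψ _).comp x ((hΦ x).sub_const lam))
      (hψΦ.neg.mul hΦ') (fun x => norm_truncNeg_le hψi _) hd hd0
      ((hW.bdd_mul hψΦ.aestronglyMeasurable (.of_forall fun x => hψ1 _)).neg.congr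
        (.of_forall fun x => by simp only [Pi.neg_apply, neg_mul, mul_assoc])),
    ← integral_neg]
  simp only [neg_mul, neg_neg, mul_assoc]

lemma tendsto_integral_truncNeg_bumpSeq_mul (hΦ : Continuous Φ) (hρ : Integrable ρ)
    (hsupp : ∀ᵐ x, ρ x ≠ 0 → Φ x ≤ lam) (hρΦ : Integrable fun x => max 0 (lam - Φ x) * ρ x) :
    Tendsto (fun n => ∫ x, truncNeg (bumpSeq n) (Φ x - lam) * ρ x) atTop
      (𝓝 (∫ x, max 0 (lam - Φ x) * ρ x)) := by
  refine tendsto_integral_of_dominated_convergence (fun x => ‖max 0 (lam - Φ x) * ρ x‖)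
    (fun n => ((continuous_truncNeg (bumpSeq n).continuous).comp
      (hΦ.sub continuous_const)).aestronglyMeasurable.mul hρ.aestronglyMeasurable)
    hρΦ.norm (fun n => ?_) ?_
  · filter_upwards [hsupp] with x hx
    rcases eq_or_ne (ρ x) 0 with h | h
    · simp [h]
    have hle := truncNeg_le (bumpSeq n).continuous (fun _ => (bumpSeq n).nonneg)
      (fun _ => (bumpSeq n).le_one) (Φ x - lam)
    rw [neg_sub] at hle
    rw [norm_mul, norm_mul, Real.norm_of_nonneg (truncNeg_nonneg (fun _ => (bumpSeq n).nonneg)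
      (by linarith [hx h])), Real.norm_of_nonneg (le_max_left _ _)]
    gcongr
  · filter_upwards [hsupp] with x hx
    rw [show max 0 (lam - Φ x) * ρ x = (lam - Φ x) * ρ x by
      rcases eq_or_ne (ρ x) 0 with h | h
      · simp [h]
      · rw [max_eq_right (by linarith [hx h])]]
    exact tendsto_const_nhds.congr' <| (eventually_truncNeg_bumpSeq (Φ x - lam)).mono
      fun n hn => by simp only [hn, neg_sub]

lemma integral_truncNeg_comp_mul_sub_le {ψ : ℝ → ℝ} (hψ : Continuous ψ) (hψi : Integrable ψ)
    (hψ0 : ∀ s, 0 ≤ ψ s) (hψ1 : ∀ s, ψ s ≤ 1) (hΦ : Continuous Φ) (hσ : Integrable σ)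
    (hρ : Integrable ρ) (hσ0 : ∀ᵐ x, 0 ≤ σ x) (hσΦ : Integrable fun x => max 0 (lam - Φ x) * σ x) :
    ∫ x, truncNeg ψ (Φ x - lam) * (σ x - ρ x)
      ≤ (∫ x, max 0 (lam - Φ x) * σ x) - ∫ x, truncNeg ψ (Φ x - lam) * ρ x := by
  have hu {g : ℝ → ℝ} (hg : Integrable g) : Integrable fun x => truncNeg ψ (Φ x - lam) * g x :=
    hg.bdd_mul (f := fun x => truncNeg ψ (Φ x - lam))
      ((continuous_truncNeg hψ).comp (hΦ.sub continuous_const)).aestronglyMeasurable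
      (.of_forall fun x => norm_truncNeg_le hψi _)
  simp only [mul_sub]
  rw [integral_sub (hu hσ) (hu hρ)]
  gcongr ?_ - _
  refine integral_mono_ae (hu hσ) hσΦ ?_
  filter_upwards [hσ0] with x hx
  refine mul_le_mul_of_nonneg_right ?_ hx
  simpa only [neg_sub] using truncNeg_le hψ hψ0 hψ1 (Φ x - lam)

lemma integral_deriv_mul_W_le (hΦ : ∀ x, HasDerivAt Φ (Φ' x) x) (hΦ' : Continuous Φ')
    (hσ : Integrable σ) (hρ : Integrable ρ) (hσ0 : ∀ᵐ x, 0 ≤ σ x) (hmass : ∫ x, σ x = ∫ x, ρ x)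
    (hsupp : ∀ᵐ x, ρ x ≠ 0 → Φ x ≤ lam)
    (hσΦ : Integrable fun x => max 0 (lam - Φ x) * σ x)
    (hρΦ : Integrable fun x => max 0 (lam - Φ x) * ρ x)
    (hW : Integrable fun x => Φ' x * W (fun y => σ y - ρ y) x) :
    ∫ x, Φ' x * W (fun y => σ y - ρ y) x ≤ ∫ x, max 0 (lam - Φ x) * (σ x - ρ x) := by
  have hΦc : Continuous Φ := continuous_iff_continuousAt.2 fun x => (hΦ x).continuousAt
  have hupper (n : ℕ) : ∫ x, bumpSeq n (Φ x - lam) * (Φ' x * W (fun y => σ y - ρ y) x)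
      ≤ (∫ x, max 0 (lam - Φ x) * σ x) - ∫ x, truncNeg (bumpSeq n) (Φ x - lam) * ρ x := by
    rw [← integral_truncNeg_comp_mul_eq (d := fun y => σ y - ρ y) (bumpSeq n).continuous
      (bumpSeq n).integrable (norm_bumpSeq_le_one n) hΦ hΦ' (hσ.sub hρ)
      (by rw [integral_sub hσ hρ, hmass, sub_self]) hW]
    exact integral_truncNeg_comp_mul_sub_le (bumpSeq n).continuous (bumpSeq n).integrable
      (fun _ => (bumpSeq n).nonneg) (fun _ => (bumpSeq n).le_one) hΦc hσ hρ hσ0 hσΦ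
  have hlhs := tendsto_integral_of_dominated_convergence _
    (F := fun n x => bumpSeq n (Φ x - lam) * (Φ' x * W (fun y => σ y - ρ y) x))
    (fun n => ((bumpSeq n).continuous.comp (hΦc.sub continuous_const)).aestronglyMeasurable.mul
      hW.aestronglyMeasurable) hW.norm
    (fun n => .of_forall fun x => by
      rw [norm_mul]; exact mul_le_of_le_one_left (norm_nonneg _) (norm_bumpSeq_le_one n _))
    (.of_forall fun x => by
      simpa using (tendsto_bumpSeq (Φ x - lam)).mul_const (Φ' x * W (fun y => σ y - ρ y) x))
  have hrhs := (tendsto_integral_truncNeg_bumpSeq_mul hΦc hρ hsupp hρΦ).const_sub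
    (∫ x, max 0 (lam - Φ x) * σ x)
  rw [← integral_sub hσΦ hρΦ] at hrhs
  simp only [← mul_sub] at hrhs
  exact le_of_tendsto_of_tendsto' hlhs hrhs hupper

end FirstVariation

lemma rpow_tangent_le {p a b : ℝ} (hp : 1 ≤ p) (ha : 0 ≤ a) (hb : 0 ≤ b) :
    p * a ^ (p - 1) * (b - a) ≤ b ^ p - a ^ p := by
  rcases ha.eq_or_lt with rfl | ha
  · rcases hp.eq_or_lt with rfl | hp
    · simp
    · simp [Real.zero_rpow (by linarith : p - 1 ≠ 0), Real.zero_rpow (by linarith : p ≠ 0),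
        Real.rpow_nonneg hb]
  have hB := one_add_mul_self_le_rpow_one_add (s := b / a - 1)
    (by linarith [div_nonneg hb ha.le]) hp
  rw [add_sub_cancel, Real.div_rpow hb ha.le, le_div_iff₀ (Real.rpow_pos_of_pos ha p)] at hB
  have : p * a ^ (p - 1) * (b - a) = p * (b / a - 1) * a ^ p := by
    rw [Real.rpow_sub_one ha.ne']; field_simp
  linarith

section Lebesgue

variable {ρ σ : ℝ → ℝ} {p : ℝ≥0∞}

lemma integrable_rpow_toReal (hp0 : p ≠ 0) (hp : p ≠ ∞) (hρ : MemLp ρ p) (hρ0 : 0 ≤ᵐ[volume] ρ) :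
    Integrable fun x => ρ x ^ p.toReal :=
  (hρ.integrable_norm_rpow hp0 hp).congr <| hρ0.mono fun x hx => by
    simp only [Real.norm_of_nonneg hx]

lemma integrable_rpow_sub_one_mul (hp1 : 1 < p) (hp : p ≠ ∞) (hρ : MemLp ρ p)
    (hρ0 : 0 ≤ᵐ[volume] ρ) (hσ : MemLp σ p) :
    Integrable fun x => ρ x ^ (p.toReal - 1) * σ x := by
  have hp0 : p ≠ 0 := (zero_lt_one.trans hp1).ne'
  have : ENNReal.HolderTriple (p / (p - 1)) p 1 := ENNReal.holderConjugate_iff.2 <| by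
    rw [ENNReal.inv_div (Or.inl (ENNReal.sub_ne_top hp)) (Or.inr hp0), ← one_div,
      ENNReal.div_add_div_same, tsub_add_cancel_of_le hp1.le, ENNReal.div_self hp0 hp]
  refine ((hρ.norm_rpow_div (p - 1)).integrable_mul hσ).congr <| hρ0.mono fun x hx => ?_
  simp only [Pi.mul_apply, Real.norm_of_nonneg hx, ENNReal.toReal_sub_of_le hp1.le hp,
    ENNReal.toReal_one]

lemma integral_rpow_tangent_le (hp1 : 1 < p) (hp : p ≠ ∞) (hρ : MemLp ρ p)
    (hρ0 : 0 ≤ᵐ[volume] ρ) (hσ : MemLp σ p) (hσ0 : 0 ≤ᵐ[volume] σ) :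
    ∫ x, p.toReal * ρ x ^ (p.toReal - 1) * (σ x - ρ x)
      ≤ (∫ x, σ x ^ p.toReal) - ∫ x, ρ x ^ p.toReal := by
  have hp0 : p ≠ 0 := (zero_lt_one.trans hp1).ne'
  have hσp := integrable_rpow_toReal hp0 hp hσ hσ0
  have hρp := integrable_rpow_toReal hp0 hp hρ hρ0
  rw [← integral_sub hσp hρp]
  refine integral_mono_ae ?_ (hσp.sub hρp) ?_
  · simp only [mul_sub, mul_assoc]
    exact ((integrable_rpow_sub_one_mul hp1 hp hρ hρ0 hσ).sub
      (integrable_rpow_sub_one_mul hp1 hp hρ hρ0 hρ)).const_mul _ |>.congr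
      (.of_forall fun x => by simp only [Pi.sub_apply]; ring)
  · filter_upwards [hρ0, hσ0] with x hx hy
    exact rpow_tangent_le (by
      rw [← ENNReal.toReal_one]
      exact ENNReal.toReal_mono hp hp1.le) hx hy

end Lebesgue

lemma two_mul_integral_mul_le {F G : ℝ → ℝ} (hF : MemLp F 2) (hG : MemLp G 2) :
    2 * ∫ x, F x * G x ≤ (∫ x, (F x + G x) ^ 2) - ∫ x, F x ^ 2 := by
  rw [← integral_sub (f := fun x => (F x + G x) ^ 2) (hF.add hG).integrable_sq hF.integrable_sq,
    ← integral_const_mul]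
  refine integral_mono ((hF.integrable_mul hG).const_mul 2)
    ((hF.add hG).integrable_sq.sub hF.integrable_sq) fun x => ?_
  nlinarith [sq_nonneg (G x)]

lemma hasDerivAt_Phi {f : ℝ → ℝ} (hf : Integrable f) (x : ℝ) :
    HasDerivAt (Phi f) (-4 * π * W f x) x :=
  ((continuous_W hf).integral_hasStrictDerivAt 0 x).hasDerivAt.const_mul _

lemma cTF_pos : 0 < cTF := by unfold cTF; positivity

lemma one_lt_five_div_three : (1 : ℝ≥0∞) < 5 / 3 := by
  rw [ENNReal.lt_div_iff_mul_lt] <;> norm_num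

lemma five_div_three_ne_top : (5 / 3 : ℝ≥0∞) ≠ ∞ := ENNReal.div_ne_top (by norm_num) (by norm_num)

lemma toReal_five_div_three : (5 / 3 : ℝ≥0∞).toReal = 5 / 3 := by
  norm_num [ENNReal.toReal_div]

section Admissible

variable {μ ν ρ σ : ℝ → ℝ}

lemma Adm.integrable_rpow_two_thirds_mul (hρ : Adm μ ρ) (hσ : Adm ν σ) :
    Integrable fun x => ρ x ^ ((2 : ℝ) / 3) * σ x := by
  have := integrable_rpow_sub_one_mul one_lt_five_div_three five_div_three_ne_top
    hρ.2.1 hρ.2.2.1 hσ.2.1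
  rwa [toReal_five_div_three, show (5 / 3 - 1 : ℝ) = 2 / 3 by norm_num] at this

lemma W_sub_eq_W_sub_add_W_sub (hμ : Integrable μ) (hρ : Integrable ρ) (hσ : Integrable σ)
    (x : ℝ) :
    W (fun y => σ y - μ y) x = W (fun y => ρ y - μ y) x + W (fun y => σ y - ρ y) x := by
  rw [W_sub hσ hμ, W_sub hρ hμ, W_sub hσ hρ]
  ring

lemma Adm.memLp_W_sub (hμ : Integrable μ) (hρ : Adm μ ρ) (hσ : Adm μ σ) :
    MemLp (W fun y => σ y - ρ y) 2 :=
  (hσ.2.2.2.1.sub hρ.2.2.2.1).ae_eq <| .of_forall fun x => by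
    simp only [Pi.sub_apply, W_sub_eq_W_sub_add_W_sub hμ hρ.1 hσ.1 x]; ring

lemma Adm.tangent_le_Etf_sub (hμ : Integrable μ) (hρ : Adm μ ρ) (hσ : Adm μ σ) :
    (∫ x, 5 / 3 * cTF * ρ x ^ ((2 : ℝ) / 3) * (σ x - ρ x))
      + 4 * π * ∫ x, W (fun y => ρ y - μ y) x * W (fun y => σ y - ρ y) x
      ≤ Etf μ σ - Etf μ ρ := by
  have hkin := integral_rpow_tangent_le one_lt_five_div_three five_div_three_ne_top
    hρ.2.1 hρ.2.2.1 hσ.2.1 hσ.2.2.1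
  rw [toReal_five_div_three, show (5 / 3 - 1 : ℝ) = 2 / 3 by norm_num] at hkin
  have hpot := two_mul_integral_mul_le hρ.2.2.2.1 (hρ.memLp_W_sub hμ hσ)
  simp only [← W_sub_eq_W_sub_add_W_sub hμ hρ.1 hσ.1] at hpot
  have hcTF : ∫ x, 5 / 3 * cTF * ρ x ^ ((2 : ℝ) / 3) * (σ x - ρ x)
      = cTF * ∫ x, 5 / 3 * ρ x ^ ((2 : ℝ) / 3) * (σ x - ρ x) := by
    rw [← integral_const_mul]; congr! 2 with x; ring
  rw [hcTF, Etf, Etf]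
  nlinarith [mul_le_mul_of_nonneg_left hkin cTF_pos.le, mul_le_mul_of_nonneg_left hpot pi_pos.le]

end Admissible

theorem stmt9_general (μ ρ : ℝ → ℝ) (hμ : Integrable μ)
    (hadm : Adm μ ρ) (lam : ℝ)
    (hEL : ∀ᵐ x, (5 / 3) * cTF * ρ x ^ ((2 : ℝ) / 3)
      = max 0 (lam - Phi (fun y => ρ y - μ y) x)) :
    ∀ σ, Adm μ σ → Etf μ ρ ≤ Etf μ σ := by
  intro σ hσ
  set f := fun y => ρ y - μ y
  have hf : Integrable f := hadm.1.sub hμ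
  have hsupp : ∀ᵐ x, ρ x ≠ 0 → Phi f x ≤ lam := by
    filter_upwards [hEL, hadm.2.2.1] with x hx hρx hne
    have : 0 < 5 / 3 * cTF * ρ x ^ ((2 : ℝ) / 3) := by
      have := Real.rpow_pos_of_pos (hρx.lt_of_ne' hne) ((2 : ℝ) / 3)
      have := cTF_pos
      positivity
    rw [hx, lt_max_iff] at this
    linarith [this.resolve_left (lt_irrefl 0)]
  have hTF {g : ℝ → ℝ} (hg : Adm μ g) : Integrable fun x => max 0 (lam - Phi f x) * g x :=
    ((hadm.integrable_rpow_two_thirds_mul hg).const_mul (5 / 3 * cTF)).congr <|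
      hEL.mono fun x hx => by beta_reduce; rw [← hx]; ring
  have hWfWd : Integrable fun x => -4 * π * W f x * W (fun y => σ y - ρ y) x :=
    ((hadm.2.2.2.1.integrable_mul (hadm.memLp_W_sub hμ hσ)).const_mul (-4 * π)).congr
      (.of_forall fun x => by simp only [Pi.mul_apply]; ring)
  have hvar := integral_deriv_mul_W_le (hasDerivAt_Phi hf) (continuous_const.mul (continuous_W hf))
    hσ.1 hadm.1 hσ.2.2.1 (hσ.2.2.2.2.trans hadm.2.2.2.2.symm) hsupp (hTF hσ) (hTF hadm) hWfWd
  simp only [mul_assoc, integral_const_mul] at hvar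
  have htangent := hadm.tangent_le_Etf_sub hμ hσ
  rw [integral_congr_ae (hEL.mono fun x hx => by rw [hx])] at htangent
  linarith

/-- Converse: if `ρ ∈ A(μ)` satisfies the Thomas–Fermi equation for some Fermi level `λ`,
then `ρ` is a minimizer of `E^TF` over `A(μ)`. -/
theorem stmt9 (μ ρ : ℝ → ℝ) (hμ : Integrable μ) (hμpos : ∀ᵐ x, 0 ≤ μ x)
    (hZ : 0 < ∫ x, μ x) (hadm : Adm μ ρ) (lam : ℝ)
    (hEL : ∀ᵐ x, (5 / 3) * cTF * ρ x ^ ((2 : ℝ) / 3)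
      = max 0 (lam - Phi (fun y => ρ y - μ y) x)) :
    ∀ σ, Adm μ σ → Etf μ ρ ≤ Etf μ σ :=
  stmt9_general μ ρ hμ hadm lam hEL
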